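/- (Density of the non-superconducting band.) Suppose that at the given parameter values the variational functional F has a unique maximizer r_β over [0,∞). Then the map μ ↦ p(μ), obtained by letting μ_f = μ vary with all other parameters held fixed, is differentiable at μ = μ_f, and its derivative there equals d^{(f)} := 1 + f(r_β)^{−1}·[ (exp(−β·(4λ + 2λ_f − μ_f)) − exp(−β·μ_f))·cosh(β·h_s) + exp(−β·(λ_s + 4λ + 2λ_f − μ_f))·cosh(β·g_{r_β,4λ}) − exp(−β·(λ_s + μ_f))·cosh(β·g_{r_β,0}) ]. -/

import Mathlib

/-!
Up to the affine term `β⁻¹ ln 2 + μ_s + μ_f`, the pressure is `max_{r ≥ 0} F(μ_f, r)`, so the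
claim is an instance of Danskin's theorem. Its hypotheses hold: `∂F/∂μ_f = f⁻¹ ∂f/∂μ_f` is
jointly continuous and bounded by `1` in modulus (`β⁻¹ ∂f/∂μ_f` is a signed sub-sum of the
positive terms of `f`), so `F(μ, ·) → F(μ_f, ·)` uniformly; and `g_{r,x} ≤ g_{0,x} + γ_s √r`
gives `F(r) ≤ F(0) − γ_s (r − √r)`, which confines all maximizers to a compact interval.
Hence maximizers `r_μ` at nearby `μ` converge to the unique maximizer `r_β`, and
`F(μ, r_β) − F(μ_f, r_β) ≤ sup F(μ, ·) − sup F(μ_f, ·) ≤ F(μ, r_μ) − F(μ_f, r_μ)`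
squeezes the difference quotient to `∂F/∂μ_f (μ_f, r_β)`.
-/

open Real Filter

/-- `g_{r,x} := sqrt((x + λ_s − μ_s)² + γ_s²·r)`. -/
noncomputable def gg (gams lams mus r x : ℝ) : ℝ :=
  Real.sqrt ((x + lams - mus) ^ 2 + gams ^ 2 * r)

/-- The function `f` from Theorem 1 of the paper. Parameters:
`beta` = β, `gams` = γ_s, `lams` = λ_s, `lamf` = λ_f, `lam` = λ,
`mus` = μ_s, `muf` = μ_f, `hs` = h_s, `hf` = h_f, `eta` = η. -/
noncomputable def ff (beta gams lams lamf lam mus muf hs hf eta r : ℝ) : ℝ :=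
  (Real.exp (-(beta * muf)) + Real.exp (-(beta * (4 * lam + 2 * lamf - muf))))
      * Real.cosh (beta * hs)
    + Real.exp (-(beta * (2 * lam - hs))) * Real.cosh (beta * (eta + hf))
    + Real.exp (-(beta * (2 * lam + hs))) * Real.cosh (beta * (eta - hf))
    + Real.exp (-(beta * (lams + muf))) * Real.cosh (beta * gg gams lams mus r 0)
    + Real.exp (-(beta * (4 * lam + lams + 2 * lamf - muf)))
      * Real.cosh (beta * gg gams lams mus r (4 * lam))
    + 2 * Real.exp (-(beta * (2 * lam + lams))) * Real.cosh (beta * hf)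
      * Real.cosh (beta * gg gams lams mus r (2 * lam))

/-- The variational functional `F(r) := −γ_s·r + β⁻¹·ln f(r)`. -/
noncomputable def FF (beta gams lams lamf lam mus muf hs hf eta r : ℝ) : ℝ :=
  -(gams * r) + beta⁻¹ * Real.log (ff beta gams lams lamf lam mus muf hs hf eta r)

/-- The grand-canonical pressure `p = β⁻¹ ln 2 + μ_s + μ_f + sup_{r ≥ 0} F(r)`. -/
noncomputable def pp (beta gams lams lamf lam mus muf hs hf eta : ℝ) : ℝ :=
  beta⁻¹ * Real.log 2 + mus + muf +
    sSup ((fun r => FF beta gams lams lamf lam mus muf hs hf eta r) '' Set.Ici 0)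

open Topology Set Function

theorem Real.cosh_add_le_cosh_mul_exp (u : ℝ) {v : ℝ} (hv : 0 ≤ v) :
    cosh (u + v) ≤ cosh u * exp v := by
  rw [cosh_add, ← cosh_add_sinh v]
  nlinarith [mul_nonneg (sub_pos.2 (sinh_lt_cosh u)).le (sinh_nonneg_iff.2 hv)]

theorem IsMaxOn.csSup_image_eq {ι α : Type*} [ConditionallyCompleteLattice α] {f : ι → α}
    {s : Set ι} {a : ι} (ha : a ∈ s) (h : IsMaxOn f s a) : sSup (f '' s) = f a :=
  IsGreatest.csSup_eq ⟨mem_image_of_mem f ha, forall_mem_image.2 (isMaxOn_iff.1 h)⟩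

section Danskin

variable {X : Type*} [TopologicalSpace X] {S K : Set X} {x₀ : X}

theorem exists_gap_of_unique_isMaxOn {f : X → ℝ} {V : Set X} (hmax : IsMaxOn f S x₀)
    (huniq : ∀ x ∈ S, IsMaxOn f S x → x = x₀) (hK : IsCompact K) (hKS : K ⊆ S)
    (hf : ContinuousOn f K) (htail : ∃ m < f x₀, ∀ x ∈ S \ K, f x ≤ m)
    (hV : IsOpen V) (hx₀V : x₀ ∈ V) :
    ∃ m < f x₀, ∀ x ∈ S \ (K ∩ V), f x ≤ m := by
  obtain ⟨m₀, hm₀, htail⟩ := htail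
  rcases (K \ V).eq_empty_or_nonempty with hempty | hne
  · refine ⟨m₀, hm₀, fun x hx => htail x ⟨hx.1, fun hxK => hx.2 ⟨hxK, ?_⟩⟩⟩
    by_contra hxV
    exact hempty.subset ⟨hxK, hxV⟩
  obtain ⟨x₁, hx₁, hx₁max⟩ := (hK.diff hV).exists_isMaxOn hne (hf.mono sdiff_subset)
  have hlt : f x₁ < f x₀ := by
    refine (isMaxOn_iff.1 hmax x₁ (hKS hx₁.1)).lt_of_ne fun heq => hx₁.2 ?_
    rw [huniq x₁ (hKS hx₁.1) (fun x hx => heq ▸ hmax hx)]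
    exact hx₀V
  refine ⟨max m₀ (f x₁), max_lt hm₀ hlt, fun x hx => ?_⟩
  by_cases hxK : x ∈ K
  · exact le_max_of_le_right (hx₁max ⟨hxK, fun hxV => hx.2 ⟨hxK, hxV⟩⟩)
  · exact le_max_of_le_left (htail x ⟨hx.1, hxK⟩)

theorem eventually_exists_isMaxOn_mem {ι : Type*} {l : Filter ι} {F : ι → X → ℝ} {f : X → ℝ}
    (hK : IsCompact K) (hKS : K ⊆ S) (hx₀K : x₀ ∈ K) (hcont : ∀ i, ContinuousOn (F i) K)
    (hf : ContinuousOn f K) (hunif : TendstoUniformlyOn F f l S) (hmax : IsMaxOn f S x₀)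
    (huniq : ∀ x ∈ S, IsMaxOn f S x → x = x₀) (htail : ∃ m < f x₀, ∀ x ∈ S \ K, f x ≤ m)
    {U : Set X} (hU : U ∈ 𝓝 x₀) :
    ∀ᶠ i in l, ∃ x ∈ U, x ∈ S ∧ IsMaxOn (F i) S x := by
  obtain ⟨V, hVU, hV, hx₀V⟩ := mem_nhds_iff.1 hU
  obtain ⟨m, hm, hmV⟩ := exists_gap_of_unique_isMaxOn hmax huniq hK hKS hf htail hV hx₀V
  obtain ⟨ε, hε, hgap⟩ : ∃ ε > 0, m + ε < f x₀ - ε := ⟨(f x₀ - m) / 3, by linarith, by linarith⟩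
  filter_upwards [Metric.tendstoUniformlyOn_iff.1 hunif ε hε] with i hi
  have hclose : ∀ x ∈ S, |F i x - f x| < ε := fun x hx => by
    simpa [Real.dist_eq, abs_sub_comm] using hi x hx
  obtain ⟨x₁, hx₁K, hx₁max⟩ := hK.exists_isMaxOn ⟨x₀, hx₀K⟩ (hcont i)
  have hlow : f x₀ - ε < F i x₁ := by
    have := (abs_lt.1 (hclose x₀ (hKS hx₀K))).1
    linarith [isMaxOn_iff.1 hx₁max x₀ hx₀K]
  have hout : ∀ x ∈ S \ (K ∩ V), F i x < F i x₁ := fun x hx => by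
    have := (abs_lt.1 (hclose x hx.1)).2
    linarith [hmV x hx]
  refine ⟨x₁, hVU ?_, hKS hx₁K, fun x hx => ?_⟩
  · by_contra hx₁V
    exact lt_irrefl _ (hout x₁ ⟨hKS hx₁K, fun h => hx₁V h.2⟩)
  · by_cases hxK : x ∈ K
    · exact hx₁max hxK
    · exact (hout x ⟨hx, fun h => hxK h.1⟩).le

theorem eventually_abs_sub_sub_le_of_hasDerivAt {F ψ : ℝ → X → ℝ} {t₀ : ℝ}
    (hF : ∀ t x, HasDerivAt (F · x) (ψ t x) t) (hψ : ContinuousAt (uncurry ψ) (t₀, x₀))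
    {ε : ℝ} (hε : 0 < ε) :
    ∀ᶠ p in 𝓝 t₀ ×ˢ 𝓝 x₀,
      |F p.1 p.2 - F t₀ p.2 - ψ t₀ x₀ * (p.1 - t₀)| ≤ ε * |p.1 - t₀| := by
  have h := hψ.eventually (Metric.closedBall_mem_nhds (ψ t₀ x₀) hε)
  rw [nhds_prod_eq, Metric.eventually_nhds_prod_iff] at h
  rw [Metric.eventually_nhds_prod_iff]
  obtain ⟨δ, hδ, P, hP, hball⟩ := h
  refine ⟨δ, hδ, P, hP, fun t ht x hx => ?_⟩
  have hmvt := (convex_ball t₀ δ).norm_image_sub_le_of_norm_hasDerivWithin_le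
    (f := fun s => F s x - ψ t₀ x₀ * s) (f' := fun s => ψ s x - ψ t₀ x₀)
    (fun s _ => (((hF s x).sub ((hasDerivAt_id' s).const_mul (ψ t₀ x₀))).congr_deriv
      (by ring)).hasDerivWithinAt)
    (fun s hs => by simpa [Real.dist_eq] using hball hs hx) (Metric.mem_ball_self hδ) ht
  simp only [Real.norm_eq_abs] at hmvt
  convert hmvt using 2
  ring

/-- Danskin's theorem for a unique maximizer. -/
theorem hasDerivAt_sSup_image_of_unique_isMaxOn {F ψ : ℝ → X → ℝ} {t₀ : ℝ}
    (hK : IsCompact K) (hKS : K ⊆ S) (hx₀K : x₀ ∈ K) (hcont : ∀ t, ContinuousOn (F t) K)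
    (hunif : TendstoUniformlyOn F (F t₀) (𝓝 t₀) S)
    (hF : ∀ t x, HasDerivAt (F · x) (ψ t x) t) (hψ : ContinuousAt (uncurry ψ) (t₀, x₀))
    (hmax : IsMaxOn (F t₀) S x₀) (huniq : ∀ x ∈ S, IsMaxOn (F t₀) S x → x = x₀)
    (htail : ∃ m < F t₀ x₀, ∀ x ∈ S \ K, F t₀ x ≤ m) :
    HasDerivAt (fun t => sSup (F t '' S)) (ψ t₀ x₀) t₀ := by
  rw [hasDerivAt_iff_isLittleO, Asymptotics.isLittleO_iff]
  intro ε hε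
  obtain ⟨δ, hδ, P, hP, hest⟩ :=
    Metric.eventually_nhds_prod_iff.1 (eventually_abs_sub_sub_le_of_hasDerivAt hF hψ hε)
  filter_upwards [eventually_exists_isMaxOn_mem hK hKS hx₀K hcont (hcont t₀) hunif hmax huniq
    htail hP, Metric.ball_mem_nhds t₀ hδ] with t ⟨x, hxP, hxS, hxmax⟩ ht
  have hup := abs_le.1 (hest ht hxP)
  have hlow := abs_le.1 (hest ht hP.self_of_nhds)
  dsimp only at hup hlow
  have h₁ : F t₀ x ≤ F t₀ x₀ := hmax hxS
  have h₂ : F t x₀ ≤ F t x := hxmax (hKS hx₀K)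
  rw [hxmax.csSup_image_eq hxS, hmax.csSup_image_eq (hKS hx₀K), Real.norm_eq_abs,
    Real.norm_eq_abs, smul_eq_mul, abs_le]
  constructor <;> linarith [hup.1, hup.2, hlow.1, hlow.2]

end Danskin

section

variable (beta gams lams lamf lam mus hs hf eta : ℝ)

noncomputable def dff (muf r : ℝ) : ℝ :=
  (Real.exp (-(beta * (4 * lam + 2 * lamf - muf))) - Real.exp (-(beta * muf)))
      * Real.cosh (beta * hs)
    + Real.exp (-(beta * (lams + 4 * lam + 2 * lamf - muf)))
      * Real.cosh (beta * gg gams lams mus r (4 * lam))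
    - Real.exp (-(beta * (lams + muf))) * Real.cosh (beta * gg gams lams mus r 0)

theorem ff_pos (muf r : ℝ) : 0 < ff beta gams lams lamf lam mus muf hs hf eta r := by
  unfold ff
  have := cosh_pos (beta * hs)
  have := cosh_pos (beta * hf)
  positivity

theorem hasDerivAt_ff (muf r : ℝ) :
    HasDerivAt (fun mu => ff beta gams lams lamf lam mus mu hs hf eta r)
      (beta * dff beta gams lams lamf lam mus hs muf r) muf := by
  have e₁ := ((hasDerivAt_id' muf).const_mul beta).fun_neg.exp
  have e₂ := (((hasDerivAt_id' muf).const_sub (4 * lam + 2 * lamf)).const_mul beta).fun_neg.exp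
  have e₃ := (((hasDerivAt_id' muf).const_add lams).const_mul beta).fun_neg.exp
  have e₄ :=
    (((hasDerivAt_id' muf).const_sub (4 * lam + lams + 2 * lamf)).const_mul beta).fun_neg.exp
  unfold ff
  refine (((((((e₁.add e₂).mul_const _).add_const _).add_const _).add (e₃.mul_const _)).add
    (e₄.mul_const _)).add_const _).congr_deriv ?_
  unfold dff
  ring_nf

theorem abs_dff_le_ff (muf r : ℝ) :
    |dff beta gams lams lamf lam mus hs muf r|
      ≤ ff beta gams lams lamf lam mus muf hs hf eta r := by
  have hexp : exp (-(beta * (lams + 4 * lam + 2 * lamf - muf)))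
      = exp (-(beta * (4 * lam + lams + 2 * lamf - muf))) := by ring_nf
  unfold dff ff
  rw [hexp, abs_le]
  have := cosh_pos (beta * hs)
  have := cosh_pos (beta * hf)
  constructor <;> linarith [(by positivity : 0 < exp (-(beta * muf)) * cosh (beta * hs)),
    (by positivity : 0 < exp (-(beta * (4 * lam + 2 * lamf - muf))) * cosh (beta * hs)),
    (by positivity : 0 < exp (-(beta * (lams + muf))) * cosh (beta * gg gams lams mus r 0)),
    (by positivity : 0 < exp (-(beta * (4 * lam + lams + 2 * lamf - muf)))
      * cosh (beta * gg gams lams mus r (4 * lam))),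
    (by positivity : 0 < exp (-(beta * (2 * lam - hs))) * cosh (beta * (eta + hf))),
    (by positivity : 0 < exp (-(beta * (2 * lam + hs))) * cosh (beta * (eta - hf))),
    (by positivity : 0 < 2 * exp (-(beta * (2 * lam + lams))) * cosh (beta * hf)
      * cosh (beta * gg gams lams mus r (2 * lam)))]

theorem abs_inv_ff_mul_dff_le_one (muf r : ℝ) :
    |(ff beta gams lams lamf lam mus muf hs hf eta r)⁻¹ * dff beta gams lams lamf lam mus hs muf r|
      ≤ 1 := by
  rw [abs_mul, abs_inv, abs_of_pos (ff_pos ..), inv_mul_le_one₀ (ff_pos ..)]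
  exact abs_dff_le_ff ..

theorem hasDerivAt_FF (hbeta : beta ≠ 0) (muf r : ℝ) :
    HasDerivAt (fun mu => FF beta gams lams lamf lam mus mu hs hf eta r)
      ((ff beta gams lams lamf lam mus muf hs hf eta r)⁻¹
        * dff beta gams lams lamf lam mus hs muf r) muf := by
  refine ((((hasDerivAt_ff ..).log (ff_pos ..).ne').const_mul beta⁻¹).const_add
    (-(gams * r))).congr_deriv ?_
  field_simp

theorem abs_FF_sub_FF_le (hbeta : beta ≠ 0) (mu mu' r : ℝ) :
    |FF beta gams lams lamf lam mus mu hs hf eta r - FF beta gams lams lamf lam mus mu' hs hf eta r|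
      ≤ |mu - mu'| := by
  simpa using convex_univ.norm_image_sub_le_of_norm_hasDerivWithin_le
    (fun t _ => (hasDerivAt_FF beta gams lams lamf lam mus hs hf eta hbeta t r).hasDerivWithinAt)
    (fun t _ => abs_inv_ff_mul_dff_le_one ..) (mem_univ mu') (mem_univ mu)

theorem tendstoUniformly_FF (hbeta : beta ≠ 0) (muf : ℝ) :
    TendstoUniformly (fun mu r => FF beta gams lams lamf lam mus mu hs hf eta r)
      (FF beta gams lams lamf lam mus muf hs hf eta) (𝓝 muf) := by
  rw [Metric.tendstoUniformly_iff]
  intro ε hε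
  filter_upwards [Metric.ball_mem_nhds muf hε] with mu hmu r
  rw [Real.dist_eq, abs_sub_comm]
  exact (abs_FF_sub_FF_le beta gams lams lamf lam mus hs hf eta hbeta mu muf r).trans_lt hmu

theorem continuous_ff :
    Continuous (uncurry fun muf r => ff beta gams lams lamf lam mus muf hs hf eta r) := by
  unfold ff gg
  fun_prop

theorem continuous_FF (muf : ℝ) : Continuous (FF beta gams lams lamf lam mus muf hs hf eta) := by
  have hff : Continuous (ff beta gams lams lamf lam mus muf hs hf eta) :=
    (continuous_ff ..).comp (Continuous.prodMk_right muf)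
  have := hff.log fun r => (ff_pos ..).ne'
  unfold FF
  fun_prop

theorem continuous_inv_ff_mul_dff :
    Continuous (uncurry fun muf r =>
      (ff beta gams lams lamf lam mus muf hs hf eta r)⁻¹
        * dff beta gams lams lamf lam mus hs muf r) := by
  refine ((continuous_ff ..).inv₀ fun p => (ff_pos ..).ne').mul ?_
  unfold dff gg
  fun_prop

theorem gg_le_gg_zero_add (hgams : 0 ≤ gams) {r : ℝ} (hr : 0 ≤ r) (x : ℝ) :
    gg gams lams mus r x ≤ gg gams lams mus 0 x + gams * √r := by
  unfold gg
  rw [mul_zero, add_zero, sqrt_sq_eq_abs, sqrt_le_left (by positivity)]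
  nlinarith [sq_abs (x + lams - mus), sq_sqrt hr,
    mul_nonneg (mul_nonneg (abs_nonneg (x + lams - mus)) hgams) (sqrt_nonneg r)]

theorem cosh_mul_gg_le (hbeta : 0 ≤ beta) (hgams : 0 ≤ gams) {r : ℝ} (hr : 0 ≤ r) (x : ℝ) :
    cosh (beta * gg gams lams mus r x)
      ≤ cosh (beta * gg gams lams mus 0 x) * exp (beta * gams * √r) := by
  have hg₀ : 0 ≤ gg gams lams mus 0 x := sqrt_nonneg _
  calc cosh (beta * gg gams lams mus r x)
      ≤ cosh (beta * gg gams lams mus 0 x + beta * gams * √r) := by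
        rw [cosh_le_cosh, abs_of_nonneg (by unfold gg; positivity), abs_of_nonneg (by positivity),
          mul_assoc, ← mul_add]
        exact mul_le_mul_of_nonneg_left (gg_le_gg_zero_add gams lams mus hgams hr x) hbeta
    _ ≤ _ := cosh_add_le_cosh_mul_exp _ (by positivity)

theorem ff_le_ff_zero_mul_exp (hbeta : 0 ≤ beta) (hgams : 0 ≤ gams) (muf : ℝ) {r : ℝ}
    (hr : 0 ≤ r) :
    ff beta gams lams lamf lam mus muf hs hf eta r
      ≤ ff beta gams lams lamf lam mus muf hs hf eta 0 * exp (beta * gams * √r) := by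
  have hE : 1 ≤ exp (beta * gams * √r) := one_le_exp (by positivity)
  have hg (x : ℝ) := cosh_mul_gg_le beta gams lams mus hbeta hgams hr x
  have := cosh_pos (beta * hs)
  have := cosh_pos (beta * hf)
  unfold ff
  linarith [mul_le_mul_of_nonneg_left (hg 0) (exp_pos (-(beta * (lams + muf)))).le,
    mul_le_mul_of_nonneg_left (hg (4 * lam))
      (exp_pos (-(beta * (4 * lam + lams + 2 * lamf - muf)))).le,
    mul_le_mul_of_nonneg_left (hg (2 * lam))
      (by positivity : 0 ≤ 2 * exp (-(beta * (2 * lam + lams))) * cosh (beta * hf)),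
    le_mul_of_one_le_right (by positivity : 0 ≤
      (exp (-(beta * muf)) + exp (-(beta * (4 * lam + 2 * lamf - muf)))) * cosh (beta * hs)
        + exp (-(beta * (2 * lam - hs))) * cosh (beta * (eta + hf))
        + exp (-(beta * (2 * lam + hs))) * cosh (beta * (eta - hf))) hE]

theorem FF_le_FF_zero_sub (hbeta : 0 < beta) (hgams : 0 ≤ gams) (muf : ℝ) {r : ℝ}
    (hr : 0 ≤ r) :
    FF beta gams lams lamf lam mus muf hs hf eta r
      ≤ FF beta gams lams lamf lam mus muf hs hf eta 0 - gams * (r - √r) := by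
  have hlog := log_le_log (ff_pos ..) (ff_le_ff_zero_mul_exp beta gams lams lamf lam mus hs hf eta
    hbeta.le hgams muf hr)
  rw [log_mul (ff_pos ..).ne' (exp_pos _).ne', log_exp] at hlog
  have := mul_le_mul_of_nonneg_left hlog (inv_pos.2 hbeta).le
  rw [mul_add, ← mul_assoc, ← mul_assoc, inv_mul_cancel₀ hbeta.ne', one_mul] at this
  unfold FF
  linarith

theorem FF_le_FF_zero_sub_one (hbeta : 0 < beta) (hgams : 0 < gams) (muf : ℝ) {r : ℝ}
    (hr : 2 / gams + 1 ≤ r) :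
    FF beta gams lams lamf lam mus muf hs hf eta r
      ≤ FF beta gams lams lamf lam mus muf hs hf eta 0 - 1 := by
  have hr₀ : 0 ≤ r := le_trans (by positivity) hr
  have hgr : 2 ≤ gams * (r - 1) := by
    rw [← div_le_iff₀' hgams]
    linarith
  have := FF_le_FF_zero_sub beta gams lams lamf lam mus hs hf eta hbeta hgams.le muf hr₀
  nlinarith [sq_sqrt hr₀, sq_nonneg (√r - 1)]

end

theorem pressure_deriv_muf_general (beta gams lams lamf lam mus muf hs hf eta : ℝ) (hbeta : 0 < beta) (hgams : 0 < gams)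
    (rb : ℝ) (hrb : 0 ≤ rb) (hmax : ∀ r' : ℝ, 0 ≤ r' → FF beta gams lams lamf lam mus muf hs hf eta r' ≤ FF beta gams lams lamf lam mus muf hs hf eta rb)
    (huniq : ∀ r : ℝ, 0 ≤ r → (∀ r' : ℝ, 0 ≤ r' → FF beta gams lams lamf lam mus muf hs hf eta r' ≤ FF beta gams lams lamf lam mus muf hs hf eta r) → r = rb) :
    HasDerivAt (fun mu => pp beta gams lams lamf lam mus mu hs hf eta)
      (1 + (ff beta gams lams lamf lam mus muf hs hf eta rb)⁻¹ *
        ((Real.exp (-(beta * (4 * lam + 2 * lamf - muf))) - Real.exp (-(beta * muf)))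
            * Real.cosh (beta * hs)
          + Real.exp (-(beta * (lams + 4 * lam + 2 * lamf - muf)))
            * Real.cosh (beta * gg gams lams mus rb (4 * lam))
          - Real.exp (-(beta * (lams + muf)))
            * Real.cosh (beta * gg gams lams mus rb 0))) muf := by
  set F := fun mu r => FF beta gams lams lamf lam mus mu hs hf eta r
  set R := max rb (2 / gams + 1)
  have htail : ∃ m < F muf rb, ∀ r ∈ Ici 0 \ Icc 0 R, F muf r ≤ m := by
    refine ⟨F muf rb - 1, by linarith, fun r hr => ?_⟩
    have hRr : R ≤ r := le_of_lt (not_le.1 fun h => hr.2 ⟨hr.1, h⟩)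
    linarith [FF_le_FF_zero_sub_one beta gams lams lamf lam mus hs hf eta hbeta hgams muf
      ((le_max_right _ _).trans hRr), hmax 0 le_rfl]
  have hsup := hasDerivAt_sSup_image_of_unique_isMaxOn (F := F)
    (ψ := fun mu r => (ff beta gams lams lamf lam mus mu hs hf eta r)⁻¹
      * dff beta gams lams lamf lam mus hs mu r)
    isCompact_Icc Icc_subset_Ici_self ⟨hrb, le_max_left _ _⟩
    (fun mu => (continuous_FF ..).continuousOn)
    (tendstoUniformly_FF beta gams lams lamf lam mus hs hf eta hbeta.ne' muf).tendstoUniformlyOn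
    (fun mu r => hasDerivAt_FF beta gams lams lamf lam mus hs hf eta hbeta.ne' mu r)
    (continuous_inv_ff_mul_dff ..).continuousAt (isMaxOn_iff.2 hmax)
    (fun r hr h => huniq r hr (isMaxOn_iff.1 h)) htail
  exact ((hasDerivAt_id' muf).const_add (beta⁻¹ * log 2 + mus)).add hsup

/-- density of the non-superconducting band: if `F` has a unique
maximizer `rb` over `[0,∞)`, then `μ ↦ p(μ)` (varying `μ_f`) is differentiable at
`μ_f` with derivative `d⁽ᶠ⁾`. -/
theorem pressure_deriv_muf (beta gams lams lamf lam mus muf hs hf eta : ℝ) (hbeta : 0 < beta) (hgams : 0 < gams) (hlams : 0 ≤ lams) (hlamf : 0 ≤ lamf) (hlam : 0 ≤ lam)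
    (rb : ℝ) (hrb : 0 ≤ rb) (hmax : ∀ r' : ℝ, 0 ≤ r' → FF beta gams lams lamf lam mus muf hs hf eta r' ≤ FF beta gams lams lamf lam mus muf hs hf eta rb)
    (huniq : ∀ r : ℝ, 0 ≤ r → (∀ r' : ℝ, 0 ≤ r' → FF beta gams lams lamf lam mus muf hs hf eta r' ≤ FF beta gams lams lamf lam mus muf hs hf eta r) → r = rb) :
    HasDerivAt (fun mu => pp beta gams lams lamf lam mus mu hs hf eta)
      (1 + (ff beta gams lams lamf lam mus muf hs hf eta rb)⁻¹ *
        ((Real.exp (-(beta * (4 * lam + 2 * lamf - muf))) - Real.exp (-(beta * muf)))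
            * Real.cosh (beta * hs)
          + Real.exp (-(beta * (lams + 4 * lam + 2 * lamf - muf)))
            * Real.cosh (beta * gg gams lams mus rb (4 * lam))
          - Real.exp (-(beta * (lams + muf)))
            * Real.cosh (beta * gg gams lams mus rb 0))) muf :=
  pressure_deriv_muf_general beta gams lams lamf lam mus muf hs hf eta hbeta hgams rb hrb hmax huniq
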